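/- Let d₁ > κ > 1, d₁ ≥ … ≥ d_N, suppose u* ∈ (1, d₁) is a minimizer of G₁(u) = Σ h_i(u)² with G₁ differentiable at u*, and let α be the smallest index with v_α < u* and β the largest index with v_β/κ > u*, where v = (d₁,…,d_{N̄}, 1) lists the eigenvalues greater than 1 followed by 1. Then u* = (Σ_{i=1}^{β} κ d_i + Σ_{i=α}^{N} d_i) / (N - α + 1 + β κ²). -/

import Mathlib

/-!
For `u > 1` the `i`-th term of `G` is the squared distance from `d i` to `[u, κ u]`, namely
`(u - d i)₊² + (κ u - d i)₋²`. As `t ↦ (t₊)²` is differentiable with derivative `2 t₊`, `G` is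
differentiable near `u*` and `G'(u*) = 0`. The choice of `α` and `β` makes `(u* - d i)₊` equal to
`u* - d i` for `i ≥ α` and to `0` otherwise, and `(κ u* - d i)₋` equal to `κ u* - d i` for `i ≤ β`
and to `0` otherwise, so `G'(u*) = 0` is a linear equation in `u*`.
-/

open Asymptotics Filter Finset

theorem HasDerivAt.of_abs_sub_sub_le_sq {f : ℝ → ℝ} {f' x : ℝ} (K : ℝ)
    (h : ∀ t, |f t - f x - f' * (t - x)| ≤ K * (t - x) ^ 2) : HasDerivAt f f' x := by
  rw [hasDerivAt_iff_isLittleO]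
  refine IsBigO.trans_isLittleO (g := fun t => ‖t - x‖ ^ 2) ?_ (isLittleO_pow_sub_sub x one_lt_two)
  refine isBigO_of_le' (c := K) _ fun t => ?_
  simpa [smul_eq_mul, mul_comm f', sq_abs] using h t

theorem abs_max_zero_sq_sub_sub_le (t x : ℝ) :
    |max t 0 ^ 2 - max x 0 ^ 2 - 2 * max x 0 * (t - x)| ≤ (t - x) ^ 2 := by
  rw [abs_le]
  rcases le_total t 0 with ht | ht <;> rcases le_total x 0 with hx | hx <;>
    simp only [max_eq_left, max_eq_right, ht, hx] <;> constructor <;> nlinarith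

theorem hasDerivAt_max_zero_sq (x : ℝ) :
    HasDerivAt (fun t => max t 0 ^ 2) (2 * max x 0) x :=
  .of_abs_sub_sub_le_sq 1 fun t => by simpa using abs_max_zero_sq_sub_sub_le t x

theorem hasDerivAt_min_zero_sq (x : ℝ) :
    HasDerivAt (fun t => min t 0 ^ 2) (2 * min x 0) x := by
  have h := (hasDerivAt_max_zero_sq (-x)).comp x (hasDerivAt_neg x)
  have hneg (s : ℝ) : max (-s) 0 = -min s 0 := by rw [← neg_zero, max_neg_neg, neg_zero]
  have hfun : (fun t : ℝ => min t 0 ^ 2) = (fun t => max t 0 ^ 2) ∘ Neg.neg := by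
    ext t; rw [Function.comp_apply, hneg, neg_sq]
  rw [hfun]
  exact h.congr_deriv (by rw [hneg]; ring)

theorem sq_min_max_sub_eq {l r : ℝ} (hlr : l ≤ r) (d : ℝ) :
    (min r (max d l) - d) ^ 2 = max (l - d) 0 ^ 2 + min (r - d) 0 ^ 2 := by
  rcases le_total d l with h | h
  · rw [max_eq_right h, min_eq_right hlr, max_eq_left (by linarith), min_eq_right (by linarith)]
    ring
  rcases le_total d r with h' | h'
  · rw [max_eq_left h, min_eq_right h', max_eq_right (by linarith), min_eq_right (by linarith)]
    ring
  · rw [max_eq_left h, min_eq_left h', max_eq_right (by linarith), min_eq_left (by linarith)]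
    ring

theorem hasDerivAt_sq_abs_min_max_sub {κ u : ℝ} (hκ : 1 ≤ κ) (hu : 1 < u) (d : ℝ) :
    HasDerivAt (fun u => |min (κ * u) (max d (max 1 u)) - d| ^ 2)
      (2 * max (u - d) 0 + κ * (2 * min (κ * u - d) 0)) u := by
  have hsmooth : HasDerivAt (fun u => max (u - d) 0 ^ 2 + min (κ * u - d) 0 ^ 2)
      (2 * max (u - d) 0 + κ * (2 * min (κ * u - d) 0)) u := by
    have hl := (hasDerivAt_max_zero_sq (u - d)).comp u ((hasDerivAt_id u).sub_const d)
    have hr := (hasDerivAt_min_zero_sq (κ * u - d)).comp u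
      (((hasDerivAt_id u).const_mul κ).sub_const d)
    exact (hl.add hr).congr_deriv (by ring)
  refine hsmooth.congr_of_eventuallyEq ?_
  filter_upwards [Ioi_mem_nhds hu] with t ht
  have ht : 1 < t := ht
  rw [sq_abs, max_eq_right ht.le, sq_min_max_sub_eq (by nlinarith)]

theorem sum_range_max_sub_zero {N a : ℕ} {d : ℕ → ℝ} {u : ℝ}
    (hle : ∀ i, a ≤ i → i < N → d i ≤ u) (hge : ∀ i < a, u ≤ d i) :
    ∑ i ∈ range N, max (u - d i) 0 = ∑ i ∈ Ico a N, (u - d i) := by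
  have hsub : Ico a N ⊆ range N := fun i hi => by simp_all
  rw [← sum_subset hsub fun i hi hi' => max_eq_right ?_]
  · refine sum_congr rfl fun i hi => max_eq_left ?_
    rw [mem_Ico] at hi
    linarith [hle i hi.1 hi.2]
  · simp only [mem_range, mem_Ico, not_and, not_lt] at hi hi'
    linarith [hge i (by omega)]

theorem sum_range_min_sub_zero {N b : ℕ} {d : ℕ → ℝ} {c : ℝ} (hb : b < N)
    (hge : ∀ i ≤ b, c ≤ d i) (hle : ∀ i, b < i → i < N → d i ≤ c) :
    ∑ i ∈ range N, min (c - d i) 0 = ∑ i ∈ range (b + 1), (c - d i) := by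
  have hsub : range (b + 1) ⊆ range N := range_subset_range.mpr hb
  rw [← sum_subset hsub fun i hi hi' => min_eq_right ?_]
  · refine sum_congr rfl fun i hi => min_eq_left ?_
    rw [mem_range] at hi
    linarith [hge i (by omega)]
  · simp only [mem_range, not_lt] at hi hi'
    linarith [hle i (by omega) hi]

theorem eq_div_of_isLocalMin_sum_sq_abs_min_max_sub {N a b : ℕ} {d : ℕ → ℝ} {κ u : ℝ}
    (hκ : 1 ≤ κ) (hu : 1 < u)
    (hmin : IsLocalMin (fun u => ∑ i ∈ range N, |min (κ * u) (max (d i) (max 1 u)) - d i| ^ 2) u)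
    (ha : a ≤ N) (hb : b < N)
    (hle_a : ∀ i, a ≤ i → i < N → d i ≤ u) (hge_a : ∀ i < a, u ≤ d i)
    (hge_b : ∀ i ≤ b, κ * u ≤ d i) (hle_b : ∀ i, b < i → i < N → d i ≤ κ * u) :
    u = (∑ i ∈ range (b + 1), κ * d i + ∑ i ∈ Ico a N, d i) / ((N : ℝ) - a + (b + 1) * κ ^ 2) := by
  have hstat := hmin.hasDerivAt_eq_zero
    (HasDerivAt.fun_sum fun i _ => hasDerivAt_sq_abs_min_max_sub hκ hu (d i))
  rw [sum_add_distrib, ← mul_sum, ← mul_sum, ← mul_sum, sum_range_max_sub_zero hle_a hge_a,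
    sum_range_min_sub_zero hb hge_b hle_b, sum_sub_distrib, sum_sub_distrib, sum_const,
    sum_const, Nat.card_Ico, card_range, nsmul_eq_mul, nsmul_eq_mul, Nat.cast_sub ha] at hstat
  have hden : 0 < (N : ℝ) - a + (b + 1) * κ ^ 2 := by
    have : (a : ℝ) ≤ N := by exact_mod_cast ha
    nlinarith
  rw [← mul_sum, eq_div_iff hden.ne']
  push_cast at hstat
  linear_combination hstat / 2

theorem le_of_card_filter_lt_le {N i : ℕ} {d : ℕ → ℝ} {c : ℝ}
    (hdec : ∀ i j, i ≤ j → j < N → d j ≤ d i)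
    (hi : #(filter (fun j => c < d j) (range N)) ≤ i) (hiN : i < N) : d i ≤ c := by
  by_contra! hlt
  have hsub : range (i + 1) ⊆ filter (fun j => c < d j) (range N) := fun j hj => by
    rw [mem_range] at hj
    rw [mem_filter, mem_range]
    exact ⟨by omega, hlt.trans_le (hdec j i (by omega) hiN)⟩
  have := card_le_card hsub
  rw [card_range] at this
  omega

theorem G1_interior_optimum_formula_general (N : ℕ) (d : ℕ → ℝ) (κ : ℝ)
    (hκ : 1 < κ)
    (hdec : ∀ i j, i ≤ j → j < N → d j ≤ d i)
    (G : ℝ → ℝ)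
    (hG : ∀ u, G u = ∑ i ∈ Finset.range N,
      (|min (κ * u) (max (d i) (max 1 u)) - d i|) ^ 2)
    (Nbar : ℕ)
    (hNbar : Nbar = ((Finset.range N).filter (fun i => 1 < d i)).card)
    (v : ℕ → ℝ)
    (hv : ∀ i < Nbar, v i = d i) (hvN : v Nbar = 1)
    (ustar : ℝ) (hu : ustar ∈ Set.Ioo 1 (d 0))
    (hmin : ∀ u ∈ Set.Ici (1 / κ), G ustar ≤ G u)
    (a b : ℕ)
    (ha : a ≤ Nbar) (hva : v a < ustar) (ha_small : ∀ j < a, ¬ v j < ustar)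
    (hb : b ≤ Nbar) (hvb : ustar < v b / κ)
    (hb_large : ∀ j ≤ Nbar, ustar < v j / κ → j ≤ b) :
    ustar = (∑ i ∈ Finset.range (b + 1), κ * d i + ∑ i ∈ Finset.Ico a N, d i) /
      ((N : ℝ) - a + (b + 1) * κ ^ 2) := by
  have hκ0 : 0 < κ := one_pos.trans hκ
  have hu1 : 1 < ustar := hu.1
  have hinv : 1 / κ < 1 := (div_lt_one hκ0).mpr hκ
  have hNbarN : Nbar ≤ N := hNbar ▸ (card_filter_le _ _).trans (card_range N).le
  have hd_le_one (i) (hi : Nbar ≤ i) (hiN : i < N) : d i ≤ 1 :=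
    le_of_card_filter_lt_le hdec (hNbar ▸ hi) hiN
  have hbNbar : b < Nbar := hb.lt_of_ne fun h => by
    rw [h, hvN] at hvb
    linarith
  have hle_a (i) (hai : a ≤ i) (hiN : i < N) : d i ≤ ustar := by
    rcases lt_or_ge i Nbar with hi | hi
    · rw [hv a (hai.trans_lt hi)] at hva
      exact (hdec a i hai hiN).trans hva.le
    · linarith [hd_le_one i hi hiN]
  have hge_a (i) (hia : i < a) : ustar ≤ d i := by
    simpa [hv i (hia.trans_le ha)] using ha_small i hia
  have hge_b (i) (hib : i ≤ b) : κ * ustar ≤ d i := by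
    rw [hv b hbNbar, lt_div_iff₀ hκ0] at hvb
    linarith [hdec i b hib (hbNbar.trans_le hNbarN)]
  have hle_b (i) (hbi : b < i) (hiN : i < N) : d i ≤ κ * ustar := by
    rcases lt_or_ge i Nbar with hi | hi
    · by_contra! h
      have := hb_large i hi.le (by rwa [hv i hi, lt_div_iff₀ hκ0, mul_comm])
      omega
    · nlinarith [hd_le_one i hi hiN]
  have hloc : IsLocalMin G ustar :=
    mem_of_superset (Ioi_mem_nhds (hinv.trans hu1)) fun u hu' => hmin u (Set.mem_Ici_of_Ioi hu')
  rw [funext hG] at hloc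
  exact eq_div_of_isLocalMin_sum_sq_abs_min_max_sub hκ.le hu1 hloc
    (ha.trans hNbarN) (hbNbar.trans_le hNbarN) hle_a hge_a hge_b hle_b

/-- Stationarity characterization of the interior optimum of the Frobenius-norm
reduced problem (Theorem 2, case 4).  Indices are 0-based: `a = α - 1`,
`b = β - 1` with respect to the 1-based indices of the paper, and
`v 0 = d₁, …, v (N̄-1) = d_{N̄}, v N̄ = 1`. -/
theorem G1_interior_optimum_formula (N : ℕ) (hN : 0 < N) (d : ℕ → ℝ) (κ : ℝ)
    (hκ : 1 < κ) (hd1 : κ < d 0)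
    (hdec : ∀ i j, i ≤ j → j < N → d j ≤ d i)
    (G : ℝ → ℝ)
    (hG : ∀ u, G u = ∑ i ∈ Finset.range N,
      (|min (κ * u) (max (d i) (max 1 u)) - d i|) ^ 2)
    (Nbar : ℕ)
    (hNbar : Nbar = ((Finset.range N).filter (fun i => 1 < d i)).card)
    (v : ℕ → ℝ)
    (hv : ∀ i < Nbar, v i = d i) (hvN : v Nbar = 1)
    (ustar : ℝ) (hu : ustar ∈ Set.Ioo 1 (d 0))
    (hmin : ∀ u ∈ Set.Ici (1 / κ), G ustar ≤ G u)
    (hdiff : DifferentiableAt ℝ G ustar)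
    (a b : ℕ)
    (ha : a ≤ Nbar) (hva : v a < ustar) (ha_small : ∀ j < a, ¬ v j < ustar)
    (hb : b ≤ Nbar) (hvb : ustar < v b / κ)
    (hb_large : ∀ j ≤ Nbar, ustar < v j / κ → j ≤ b) :
    ustar = (∑ i ∈ Finset.range (b + 1), κ * d i + ∑ i ∈ Finset.Ico a N, d i) /
      ((N : ℝ) - a + (b + 1) * κ ^ 2) :=
  G1_interior_optimum_formula_general N d κ hκ hdec G hG Nbar hNbar v hv hvN ustar hu hmin a b ha
    hva ha_small hb hvb hb_large
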